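/- Let μ be a finite Borel measure on ℝ^d satisfying the Frostman condition μ(B(x,r)) ≤ C r^s for all x and 0 < r ≤ 1, with s > d/2, and with compact support. Then for any compact interval I ⊂ (0,∞) and t ≥ 1, ∫_{x : |x| ∈ tI} |μ̂(x)|² dx ≲ t^{d-s}, with implicit constant depending on C, d, s, and I. -/

import Mathlib

/-!
Since `‖μ̂‖²` is the Fourier transform of `μ` convolved with its reflection, Fubini and the
Fourier transform of the Gaussian give
`∫ exp (-π ‖x‖² / T²) ‖μ̂ x‖² dx = T ^ d ∬ exp (-π T² ‖y - z‖²) dμ(y) dμ(z)`.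
The weight is at least `exp (-π)` on the ball of radius `T`, and splitting the inner integral
into the shells `k ≤ T ‖y - z‖ < k + 1` the Frostman condition bounds it by a constant times
`T ^ (-s)`. Hence `∫_{‖x‖ ≤ T} ‖μ̂‖² ≲ T ^ (d - s)`, and the annulus `‖x‖ ∈ t I` lies in the
ball of radius `t * max R 1`.
-/

open MeasureTheory RealInnerProductSpace

noncomputable def ftMeasure {d : ℕ} (μ : Measure (EuclideanSpace ℝ (Fin d)))
    (ξ : EuclideanSpace ℝ (Fin d)) : ℂ :=
  ∫ x, Complex.exp (-2 * Real.pi * Complex.I * (⟪x, ξ⟫ : ℝ)) ∂μ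


open Real FourierTransform Metric Set Filter

lemma summable_exp_neg_pi_mul_sq_mul_rpow (s : ℝ) :
    Summable fun k : ℕ ↦ rexp (-π * k ^ 2) * (k + 1) ^ s := by
  have h := (summable_nat_add_iff 1).2 (Real.summable_pow_mul_exp_neg_nat_mul ⌈s⌉₊ pi_pos)
  refine (h.mul_left (rexp π)).of_nonneg_of_le (fun k ↦ by positivity) fun k ↦ ?_
  have hk : (1 : ℝ) ≤ k + 1 := by simp
  push_cast
  calc rexp (-π * k ^ 2) * (k + 1) ^ s
      ≤ rexp (π + -π * (k + 1)) * (k + 1) ^ ⌈s⌉₊ := by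
        gcongr
        · nlinarith [pi_pos, (by exact_mod_cast Nat.zero_le k : (0 : ℝ) ≤ k),
            (by exact_mod_cast Nat.le_self_pow two_ne_zero k : (k : ℝ) ≤ k ^ 2)]
        · rw [← Real.rpow_natCast]
          exact Real.rpow_le_rpow_of_exponent_le hk (Nat.le_ceil s)
    _ = rexp π * ((k + 1) ^ ⌈s⌉₊ * rexp (-π * (k + 1))) := by
        rw [exp_add]; ring

section Frostman

variable {X : Type*} [PseudoMetricSpace X] [MeasurableSpace X] (μ : Measure X)

lemma measure_closedBall_le_of_forall_le_one [IsFiniteMeasure μ] {C s : ℝ} (hC : 0 ≤ C)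
    (hs : 0 ≤ s)
    (hμ : ∀ x r, 0 < r → r ≤ 1 → μ (closedBall x r) ≤ ENNReal.ofReal (C * r ^ s))
    (x : X) {r : ℝ} (hr : 0 < r) :
    μ (closedBall x r) ≤ ENNReal.ofReal ((C + μ.real univ) * r ^ s) := by
  have hμ0 : 0 ≤ μ.real univ := measureReal_nonneg
  rcases le_or_gt r 1 with hr1 | hr1
  · refine (hμ x r hr hr1).trans (ENNReal.ofReal_le_ofReal ?_)
    gcongr
    linarith
  · calc μ (closedBall x r) ≤ μ univ := measure_mono (subset_univ _)
      _ = ENNReal.ofReal (μ.real univ) := (ofReal_measureReal (measure_ne_top _ _)).symm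
      _ ≤ _ := ENNReal.ofReal_le_ofReal (by nlinarith [one_le_rpow hr1.le hs])

variable [OpensMeasurableSpace X]

lemma lintegral_gaussian_le_tsum {T : ℝ} (hT : 0 < T) (y : X) :
    ∫⁻ z, ENNReal.ofReal (rexp (-(π * T ^ 2) * dist y z ^ 2)) ∂μ ≤
      ∑' k : ℕ, ENNReal.ofReal (rexp (-π * k ^ 2)) * μ (closedBall y ((k + 1) / T)) := by
  have hpt : ∀ z, ENNReal.ofReal (rexp (-(π * T ^ 2) * dist y z ^ 2)) ≤
      ∑' k : ℕ, (closedBall y ((k + 1) / T)).indicator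
        (fun _ ↦ ENNReal.ofReal (rexp (-π * k ^ 2))) z := by
    intro z
    set k := ⌊T * dist y z⌋₊
    have hk : (k : ℝ) ≤ T * dist y z := Nat.floor_le (by positivity)
    have hmem : z ∈ closedBall y ((k + 1) / T) := by
      rw [mem_closedBall, dist_comm, le_div_iff₀ hT]
      nlinarith [Nat.lt_floor_add_one (T * dist y z)]
    refine le_trans ?_ (ENNReal.le_tsum k)
    rw [indicator_of_mem hmem]
    have hk2 : (k : ℝ) ^ 2 ≤ (T * dist y z) ^ 2 := pow_le_pow_left₀ (by positivity) hk 2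
    refine ENNReal.ofReal_le_ofReal (exp_le_exp.2 ?_)
    nlinarith [mul_le_mul_of_nonneg_left hk2 pi_pos.le]
  calc ∫⁻ z, ENNReal.ofReal (rexp (-(π * T ^ 2) * dist y z ^ 2)) ∂μ
      ≤ ∫⁻ z, ∑' k : ℕ, (closedBall y ((k + 1) / T)).indicator
          (fun _ ↦ ENNReal.ofReal (rexp (-π * k ^ 2))) z ∂μ := lintegral_mono hpt
    _ = _ := by
        rw [lintegral_tsum fun k ↦
          (measurable_const.indicator measurableSet_closedBall).aemeasurable]
        simp_rw [lintegral_indicator_const measurableSet_closedBall]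

lemma lintegral_gaussian_le_of_measure_closedBall_le {C s : ℝ} (hC : 0 ≤ C)
    (hμ : ∀ x r, 0 < r → μ (closedBall x r) ≤ ENNReal.ofReal (C * r ^ s))
    {T : ℝ} (hT : 0 < T) (y : X) :
    ∫⁻ z, ENNReal.ofReal (rexp (-(π * T ^ 2) * dist y z ^ 2)) ∂μ ≤
      ENNReal.ofReal (C * (∑' k : ℕ, rexp (-π * k ^ 2) * (k + 1) ^ s) * T ^ (-s)) := by
  have hsum := summable_exp_neg_pi_mul_sq_mul_rpow s
  calc ∫⁻ z, ENNReal.ofReal (rexp (-(π * T ^ 2) * dist y z ^ 2)) ∂μ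
      ≤ ∑' k : ℕ, ENNReal.ofReal (rexp (-π * k ^ 2)) * μ (closedBall y ((k + 1) / T)) :=
        lintegral_gaussian_le_tsum μ hT y
    _ ≤ ∑' k : ℕ, ENNReal.ofReal (rexp (-π * k ^ 2)) * ENNReal.ofReal (C * ((k + 1) / T) ^ s) :=
        ENNReal.tsum_le_tsum fun k ↦ by gcongr; exact hμ y _ (by positivity)
    _ = ∑' k : ℕ, ENNReal.ofReal (C * T ^ (-s) * (rexp (-π * k ^ 2) * (k + 1) ^ s)) := by
        congr 1 with k
        rw [← ENNReal.ofReal_mul (by positivity), div_rpow (by positivity) hT.le, rpow_neg hT.le]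
        ring_nf
    _ = _ := by
        rw [← ENNReal.ofReal_tsum_of_nonneg (fun k ↦ by positivity) (hsum.mul_left _),
          tsum_mul_left]
        ring_nf

lemma exists_integral_prod_gaussian_le [SecondCountableTopology X] [IsFiniteMeasure μ]
    {C s : ℝ} (hC : 0 ≤ C) (hs : 0 ≤ s)
    (hμ : ∀ x r, 0 < r → r ≤ 1 → μ (closedBall x r) ≤ ENNReal.ofReal (C * r ^ s)) :
    ∃ c, 0 ≤ c ∧ ∀ T, 0 < T →
      ∫ p, rexp (-(π * T ^ 2) * dist p.1 p.2 ^ 2) ∂(μ.prod μ) ≤ c * T ^ (-s) := by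
  set S := ∑' k : ℕ, rexp (-π * k ^ 2) * (k + 1) ^ s
  have hS : 0 ≤ S := tsum_nonneg fun k ↦ by positivity
  have hC' : 0 ≤ C + μ.real univ := by linarith [measureReal_nonneg (μ := μ) (s := univ)]
  refine ⟨(C + μ.real univ) * S * μ.real univ, by positivity, fun T hT ↦ ?_⟩
  have hmeas : Measurable fun p : X × X ↦ rexp (-(π * T ^ 2) * dist p.1 p.2 ^ 2) := by
    fun_prop
  rw [integral_eq_lintegral_of_nonneg_ae (ae_of_all _ fun p ↦ by positivity)
    hmeas.aestronglyMeasurable]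
  refine ENNReal.toReal_le_of_le_ofReal (by positivity) ?_
  calc ∫⁻ p, ENNReal.ofReal (rexp (-(π * T ^ 2) * dist p.1 p.2 ^ 2)) ∂(μ.prod μ)
      = ∫⁻ y, ∫⁻ z, ENNReal.ofReal (rexp (-(π * T ^ 2) * dist y z ^ 2)) ∂μ ∂μ :=
        lintegral_prod _ hmeas.ennreal_ofReal.aemeasurable
    _ ≤ ∫⁻ _, ENNReal.ofReal ((C + μ.real univ) * S * T ^ (-s)) ∂μ :=
        lintegral_mono fun y ↦ lintegral_gaussian_le_of_measure_closedBall_le μ hC'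
          (fun x r hr ↦ measure_closedBall_le_of_forall_le_one μ hC hs hμ x hr) hT y
    _ = ENNReal.ofReal ((C + μ.real univ) * S * μ.real univ * T ^ (-s)) := by
        rw [lintegral_const, ← ofReal_measureReal (measure_ne_top _ _),
          ← ENNReal.ofReal_mul (by positivity)]
        ring_nf

end Frostman

section Gaussian

variable {V : Type*} [NormedAddCommGroup V] [InnerProductSpace ℝ V] [FiniteDimensional ℝ V]
  [MeasurableSpace V] [BorelSpace V]

lemma integrable_exp_neg_mul_sq_norm {b : ℝ} (hb : 0 < b) :
    Integrable fun x : V ↦ rexp (-b * ‖x‖ ^ 2) :=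
  Integrable.of_integral_ne_zero <| by
    rw [GaussianFourier.integral_rexp_neg_mul_sq_norm hb]; positivity

lemma integral_fourierChar_mul_gaussian {T : ℝ} (hT : 0 < T) (w : V) :
    ∫ x : V, (𝐞 (-⟪x, w⟫) : ℂ) * rexp (-(π / T ^ 2) * ‖x‖ ^ 2) =
      T ^ Module.finrank ℝ V * rexp (-(π * T ^ 2) * ‖w‖ ^ 2) := by
  have hb : 0 < ((π / T ^ 2 : ℝ) : ℂ).re := by rw [Complex.ofReal_re]; positivity
  have h := fourier_gaussian_innerProductSpace hb w
  rw [fourier_eq] at h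
  simp only [Circle.smul_def, smul_eq_mul] at h
  have hT2 : (π : ℂ) / ((π / T ^ 2 : ℝ) : ℂ) = ((T ^ 2 : ℝ) : ℂ) := by
    push_cast
    field_simp
  have hpow : ∀ n : ℕ, ((T ^ 2 : ℝ) : ℂ) ^ ((n : ℂ) / 2) = (T : ℂ) ^ n := fun n ↦ by
    rw [show ((n : ℂ) / 2) = ((n / 2 : ℝ) : ℂ) by push_cast; ring,
      ← Complex.ofReal_cpow (by positivity), Real.rpow_div_two_eq_sqrt _ (by positivity),
      Real.sqrt_sq hT.le, Real.rpow_natCast]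
    push_cast
    rfl
  rw [hT2, hpow] at h
  refine (integral_congr_ae (ae_of_all _ fun x ↦ ?_)).trans (h.trans ?_)
  · push_cast
    ring_nf
  · push_cast
    field_simp

end Gaussian

section FourierMeasure

variable {d : ℕ} (μ : Measure (EuclideanSpace ℝ (Fin d)))

lemma ftMeasure_eq_charFun (ξ : EuclideanSpace ℝ (Fin d)) :
    ftMeasure μ ξ = charFun μ (-(2 * π) • ξ) := by
  simp only [ftMeasure, charFun_apply, inner_smul_right]
  congr 1 with x
  push_cast
  ring_nf

lemma ftMeasure_eq_integral_fourierChar (ξ : EuclideanSpace ℝ (Fin d)) :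
    ftMeasure μ ξ = ∫ x, (𝐞 (-⟪x, ξ⟫) : ℂ) ∂μ := by
  simp only [ftMeasure, fourierChar_apply]
  congr 1 with x
  push_cast
  ring_nf

lemma continuous_ftMeasure [IsFiniteMeasure μ] : Continuous (ftMeasure μ) := by
  rw [funext (ftMeasure_eq_charFun μ)]
  fun_prop

lemma norm_ftMeasure_le (ξ : EuclideanSpace ℝ (Fin d)) : ‖ftMeasure μ ξ‖ ≤ μ.real univ := by
  rw [ftMeasure_eq_charFun]
  exact norm_charFun_le _

lemma sq_norm_ftMeasure_eq_integral_prod [IsFiniteMeasure μ] (ξ : EuclideanSpace ℝ (Fin d)) :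
    (‖ftMeasure μ ξ‖ ^ 2 : ℂ) = ∫ p, (𝐞 (-⟪ξ, p.1 - p.2⟫) : ℂ) ∂(μ.prod μ) := by
  have hconj : (starRingEnd ℂ) (ftMeasure μ ξ) = ∫ x, (𝐞 ⟪x, ξ⟫ : ℂ) ∂μ := by
    rw [ftMeasure_eq_integral_fourierChar, ← integral_conj]
    simp_rw [← Circle.coe_inv_eq_conj, ← AddChar.map_neg_eq_inv, neg_neg]
  rw [← Complex.mul_conj', hconj, ftMeasure_eq_integral_fourierChar, ← integral_prod_mul]
  congr 1 with p
  rw [← Circle.coe_mul, ← AddChar.map_add_eq_mul, inner_sub_right, real_inner_comm ξ,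
    real_inner_comm ξ]
  ring_nf

lemma integral_gaussian_mul_sq_norm_ftMeasure [IsFiniteMeasure μ] {T : ℝ} (hT : 0 < T) :
    ∫ x, rexp (-(π / T ^ 2) * ‖x‖ ^ 2) * ‖ftMeasure μ x‖ ^ 2 =
      T ^ d * ∫ p, rexp (-(π * T ^ 2) * ‖p.1 - p.2‖ ^ 2) ∂(μ.prod μ) := by
  set g : EuclideanSpace ℝ (Fin d) → ℝ := fun x ↦ rexp (-(π / T ^ 2) * ‖x‖ ^ 2)
  have hg : Integrable g := integrable_exp_neg_mul_sq_norm (by positivity)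
  have hF : Integrable (fun q : EuclideanSpace ℝ (Fin d) × _ ↦
      (𝐞 (-⟪q.1, q.2.1 - q.2.2⟫) : ℂ) * g q.1) (volume.prod (μ.prod μ)) := by
    refine (hg.comp_fst (μ.prod μ)).mono' (by fun_prop) (ae_of_all _ fun q ↦ ?_)
    simp only [norm_mul, Circle.norm_coe, one_mul, Complex.norm_real, Real.norm_eq_abs, g,
      abs_of_pos (exp_pos _), le_rfl]
  apply Complex.ofReal_injective
  rw [← integral_const_mul, ← integral_complex_ofReal, ← integral_complex_ofReal]
  calc ∫ x : EuclideanSpace ℝ (Fin d), ((g x * ‖ftMeasure μ x‖ ^ 2 : ℝ) : ℂ)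
      = ∫ x : EuclideanSpace ℝ (Fin d), ∫ p, (𝐞 (-⟪x, p.1 - p.2⟫) : ℂ) * g x ∂(μ.prod μ) := by
        congr 1 with x
        rw [Complex.ofReal_mul, Complex.ofReal_pow, sq_norm_ftMeasure_eq_integral_prod,
          integral_mul_const, mul_comm]
    _ = ∫ p : EuclideanSpace ℝ (Fin d) × EuclideanSpace ℝ (Fin d),
          (∫ x : EuclideanSpace ℝ (Fin d), (𝐞 (-⟪x, p.1 - p.2⟫) : ℂ) * g x) ∂(μ.prod μ) :=
        integral_integral_swap hF
    _ = _ := by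
        congr 1 with p
        rw [integral_fourierChar_mul_gaussian hT, finrank_euclideanSpace_fin]
        push_cast
        rfl

lemma setIntegral_closedBall_sq_norm_ftMeasure_le [IsFiniteMeasure μ] {T : ℝ} (hT : 0 < T) :
    ∫ x in closedBall 0 T, ‖ftMeasure μ x‖ ^ 2 ≤
      rexp π * T ^ d * ∫ p, rexp (-(π * T ^ 2) * ‖p.1 - p.2‖ ^ 2) ∂(μ.prod μ) := by
  set g : EuclideanSpace ℝ (Fin d) → ℝ := fun x ↦ rexp (-(π / T ^ 2) * ‖x‖ ^ 2)
  have hcont : Continuous fun x ↦ ‖ftMeasure μ x‖ ^ 2 := (continuous_ftMeasure μ).norm.pow 2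
  have hint : Integrable fun x ↦ rexp π * (g x * ‖ftMeasure μ x‖ ^ 2) := by
    refine ((integrable_exp_neg_mul_sq_norm (by positivity)).mul_bdd (c := μ.real univ ^ 2)
      hcont.aestronglyMeasurable (ae_of_all _ fun x ↦ ?_)).const_mul _
    rw [Real.norm_of_nonneg (by positivity)]
    exact pow_le_pow_left₀ (norm_nonneg _) (norm_ftMeasure_le μ x) 2
  have hweight : ∀ x ∈ closedBall (0 : EuclideanSpace ℝ (Fin d)) T, 1 ≤ rexp π * g x := by
    intro x hx
    rw [mem_closedBall_zero_iff] at hx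
    have hx2 : ‖x‖ ^ 2 ≤ T ^ 2 := pow_le_pow_left₀ (norm_nonneg x) hx 2
    rw [← exp_add, one_le_exp_iff, neg_mul, div_mul_eq_mul_div, ← sub_eq_add_neg, sub_nonneg,
      div_le_iff₀ (by positivity)]
    gcongr
  calc ∫ x in closedBall 0 T, ‖ftMeasure μ x‖ ^ 2
      ≤ ∫ x in closedBall 0 T, rexp π * (g x * ‖ftMeasure μ x‖ ^ 2) := by
        refine setIntegral_mono_on
          (hcont.continuousOn.integrableOn_compact (isCompact_closedBall 0 T))
          hint.integrableOn measurableSet_closedBall fun x hx ↦ ?_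
        rw [← mul_assoc]
        exact le_mul_of_one_le_left (by positivity) (hweight x hx)
    _ ≤ ∫ x, rexp π * (g x * ‖ftMeasure μ x‖ ^ 2) :=
        setIntegral_le_integral hint (ae_of_all _ fun x ↦ by positivity)
    _ = _ := by
        rw [integral_const_mul, integral_gaussian_mul_sq_norm_ftMeasure μ hT, mul_assoc]

lemma exists_setIntegral_closedBall_sq_norm_ftMeasure_le [IsFiniteMeasure μ] {C s : ℝ}
    (hC : 0 ≤ C) (hs : 0 ≤ s)
    (hμ : ∀ x r, 0 < r → r ≤ 1 → μ (closedBall x r) ≤ ENNReal.ofReal (C * r ^ s)) :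
    ∃ K, 0 ≤ K ∧ ∀ T, 0 < T →
      ∫ x in closedBall 0 T, ‖ftMeasure μ x‖ ^ 2 ≤ K * T ^ ((d : ℝ) - s) := by
  obtain ⟨c, hc, hgauss⟩ := exists_integral_prod_gaussian_le μ hC hs hμ
  refine ⟨rexp π * c, by positivity, fun T hT ↦ ?_⟩
  calc ∫ x in closedBall 0 T, ‖ftMeasure μ x‖ ^ 2
      ≤ rexp π * T ^ d * ∫ p, rexp (-(π * T ^ 2) * ‖p.1 - p.2‖ ^ 2) ∂(μ.prod μ) :=
        setIntegral_closedBall_sq_norm_ftMeasure_le μ hT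
    _ ≤ rexp π * T ^ d * (c * T ^ (-s)) := by
        gcongr
        simpa only [dist_eq_norm] using hgauss T hT
    _ = rexp π * c * T ^ ((d : ℝ) - s) := by
        rw [rpow_sub hT, rpow_natCast, rpow_neg hT.le]
        ring

end FourierMeasure

theorem stmt_8_general (d : ℕ) (μ : Measure (EuclideanSpace ℝ (Fin d)))
    [IsFiniteMeasure μ]
    (C s : ℝ) (hC : 0 < C) (hs : d / 2 < s)
    (hfrost : ∀ x : EuclideanSpace ℝ (Fin d), ∀ r : ℝ, 0 < r → r ≤ 1 →
      μ (Metric.closedBall x r) ≤ ENNReal.ofReal (C * r ^ s))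
    (r R : ℝ) :
    ∃ K : ℝ, 0 < K ∧ ∀ t : ℝ, 1 ≤ t →
      ∫ x in {x : EuclideanSpace ℝ (Fin d) | ‖x‖ ∈ Set.Icc (t * r) (t * R)},
        ‖ftMeasure μ x‖ ^ 2 ≤ K * t ^ (d - s) := by
  obtain ⟨K, hK, hball⟩ := exists_setIntegral_closedBall_sq_norm_ftMeasure_le μ hC.le
    ((by positivity : (0 : ℝ) ≤ d / 2).trans hs.le) hfrost
  set M := max R 1
  refine ⟨K * M ^ ((d : ℝ) - s) + 1, by positivity, fun t ht ↦ ?_⟩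
  have ht0 : 0 < t := one_pos.trans_le ht
  have hannulus : {x : EuclideanSpace ℝ (Fin d) | ‖x‖ ∈ Icc (t * r) (t * R)} ⊆
      closedBall 0 (t * M) := fun x hx ↦
    mem_closedBall_zero_iff.2 (hx.2.trans (by gcongr; exact le_max_left R 1))
  calc ∫ x in {x : EuclideanSpace ℝ (Fin d) | ‖x‖ ∈ Icc (t * r) (t * R)}, ‖ftMeasure μ x‖ ^ 2
      ≤ ∫ x in closedBall 0 (t * M), ‖ftMeasure μ x‖ ^ 2 :=
        setIntegral_mono_set
          (((continuous_ftMeasure μ).norm.pow 2).continuousOn.integrableOn_compact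
            (isCompact_closedBall 0 _))
          (ae_of_all _ fun x ↦ by positivity) hannulus.eventuallyLE
    _ ≤ K * (t * M) ^ ((d : ℝ) - s) := hball _ (by positivity)
    _ = K * M ^ ((d : ℝ) - s) * t ^ ((d : ℝ) - s) := by
        rw [mul_rpow ht0.le (by positivity)]
        ring
    _ ≤ (K * M ^ ((d : ℝ) - s) + 1) * t ^ ((d : ℝ) - s) := by
        gcongr
        linarith

theorem stmt_8 (d : ℕ) (hd : 2 ≤ d) (μ : Measure (EuclideanSpace ℝ (Fin d)))
    [IsFiniteMeasure μ]
    (hμc : ∃ K : Set (EuclideanSpace ℝ (Fin d)), IsCompact K ∧ μ Kᶜ = 0)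
    (C s : ℝ) (hC : 0 < C) (hs : d / 2 < s) (hsd : s < d)
    (hfrost : ∀ x : EuclideanSpace ℝ (Fin d), ∀ r : ℝ, 0 < r → r ≤ 1 →
      μ (Metric.closedBall x r) ≤ ENNReal.ofReal (C * r ^ s))
    (r R : ℝ) (hr : 0 < r) (hrR : r ≤ R) :
    ∃ K : ℝ, 0 < K ∧ ∀ t : ℝ, 1 ≤ t →
      ∫ x in {x : EuclideanSpace ℝ (Fin d) | ‖x‖ ∈ Set.Icc (t * r) (t * R)},
        ‖ftMeasure μ x‖ ^ 2 ≤ K * t ^ (d - s) :=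
  stmt_8_general d μ C s hC hs hfrost r R
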